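/- arXiv:2304.05373 — 3 statements merged into one kernel-verified Lean document; each statement's English description precedes it below -/
import Mathlib

section
/- Let n ≥ 1 and let E be a finite-dimensional real inner product space. For every smooth function u : ℝⁿ × (0,∞) → E whose support is a compact subset of the open half-space ℝⁿ × (0,∞), one has the McKean-type estimate ∫_{ℝⁿ×(0,∞)} t^{1−n} ( ‖∂_t u(ξ,t)‖² + Σ_{i=1}^{n} ‖∂_{ξ_i} u(ξ,t)‖² ) dξ dt ≥ (n²/4) ∫_{ℝⁿ×(0,∞)} t^{−1−n} ‖u(ξ,t)‖² dξ dt. -/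
open MeasureTheory Set
open scoped RealInnerProductSpace

lemma amgm_aux (c a b X Y Z r : ℝ) (hc : 0 < c) (hX : 0 < X) (hY : 0 ≤ Y)
    (hZ : 0 ≤ Z) (hXZ : X * Z = Y ^ 2) (hr : r ≤ a * b) (ha : 0 ≤ a) (hb : 0 ≤ b) :
    Y * (2 * r) ≤ 2 / c * (X * a ^ 2) + c / 2 * (Z * b ^ 2) := by
  have h1 : Y * (2 * r) ≤ Y * (2 * (a * b)) := by nlinarith
  have key : 2 / c * (X * a ^ 2) + c / 2 * (Z * b ^ 2) - Y * (2 * (a*b))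
      = (2 * X * a - c * Y * b) ^ 2 / (2 * c * X) + (c/(2*X)) * (X * Z - Y^2) * b^2 := by
    field_simp
    ring
  have h2 : 0 ≤ 2 / c * (X * a ^ 2) + c / 2 * (Z * b ^ 2) - Y * (2 * (a*b)) := by
    rw [key, hXZ, sub_self, mul_zero, zero_mul, add_zero]
    positivity
  linarith

set_option maxHeartbeats 1000000 in
/-- McKean-type estimate on hyperbolic space, realized as the upper half-space
`ℝⁿ × (0,∞)` with the metric `t⁻²(dt² + |dξ|²)`:  for every smooth `E`-valued
function `u` whose support is a compact subset of the open half-space,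
`∫ t^{1-n} (‖∂ₜu‖² + Σᵢ ‖∂_{ξᵢ}u‖²) ≥ (n²/4) ∫ t^{-1-n} ‖u‖²`. -/
theorem mckean_estimate (n : ℕ) (hn : 1 ≤ n) {E : Type*} [NormedAddCommGroup E]
    [InnerProductSpace ℝ E] [FiniteDimensional ℝ E]
    (u : (Fin n → ℝ) × ℝ → E) (hu : ContDiff ℝ (⊤ : ℕ∞) u)
    (hcs : HasCompactSupport u)
    (hsupp : tsupport u ⊆ {p : (Fin n → ℝ) × ℝ | 0 < p.2}) :
    ∫ p in {p : (Fin n → ℝ) × ℝ | 0 < p.2},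
        p.2 ^ (1 - (n : ℝ)) *
          (‖fderiv ℝ u p (0, 1)‖ ^ 2 +
            ∑ i : Fin n, ‖fderiv ℝ u p (Pi.single i 1, 0)‖ ^ 2)
      ≥ (n : ℝ) ^ 2 / 4 *
        ∫ p in {p : (Fin n → ℝ) × ℝ | 0 < p.2},
          p.2 ^ (-1 - (n : ℝ)) * ‖u p‖ ^ 2 := by
  classical
  set S : Set ((Fin n → ℝ) × ℝ) := {p : (Fin n → ℝ) × ℝ | 0 < p.2} with hSdef
  have hSmeas : MeasurableSet S := measurableSet_lt measurable_const measurable_snd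
  have hn' : (0 : ℝ) < n := by exact_mod_cast hn
  -- a lower bound on the second coordinate over the support
  obtain ⟨a, ha0, haT⟩ : ∃ a : ℝ, 0 < a ∧ ∀ p ∈ tsupport u, a ≤ p.2 := by
    rcases eq_empty_or_nonempty (tsupport u) with h | h
    · exact ⟨1, one_pos, by simp [h]⟩
    · have hK : IsCompact (Prod.snd '' tsupport u) := hcs.image continuous_snd
      have hKne : (Prod.snd '' tsupport u).Nonempty := h.image _
      refine ⟨sInf (Prod.snd '' tsupport u), ?_, ?_⟩
      · obtain ⟨p, hp, hps⟩ := hK.sInf_mem hKne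
        exact hps ▸ hsupp hp
      · intro p hp
        exact csInf_le hK.bddBelow ⟨p, hp, rfl⟩
  -- derivative in the t-direction
  set Du : (Fin n → ℝ) × ℝ → E := fun p => fderiv ℝ u p (0, 1) with hDudef
  have hDucont : Continuous Du := by
    have h1 : Continuous (fderiv ℝ u) := hu.continuous_fderiv (by simp)
    exact (ContinuousLinearMap.apply ℝ E ((0 : Fin n → ℝ), (1:ℝ))).continuous.comp h1
  have hDu0 : ∀ p, p ∉ tsupport u → Du p = 0 := by
    intro p hp
    have : fderiv ℝ u p = 0 := by
      by_contra h
      exact hp (support_fderiv_subset ℝ (Function.mem_support.mpr h))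
    simp [hDudef, this]
  have hu0 : ∀ p, p ∉ tsupport u → u p = 0 := fun p hp =>
    image_eq_zero_of_notMem_tsupport hp
  -- the cutoff function
  set ψ : ℝ → ℝ := fun t => Real.smoothTransition ((4 * t - 2 * a) / a) with hψdef
  have hψ0 : ∀ t ≤ a / 2, ψ t = 0 := by
    intro t ht
    apply Real.smoothTransition.zero_of_nonpos
    rw [div_nonpos_iff]
    right; constructor <;> linarith
  have hψ1 : ∀ t, 3 * a / 4 ≤ t → ψ t = 1 := by
    intro t ht
    apply Real.smoothTransition.one_of_one_le
    rw [le_div_iff₀ ha0]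
    linarith
  have hu1 : ContDiff ℝ 1 u := hu.of_le (by simp)
  have hψc : ContDiff ℝ 1 ψ := by
    have h1 : ContDiff ℝ 1 (fun t : ℝ => (4 * t - 2 * a) / a) :=
      ((contDiff_const.mul contDiff_id).sub contDiff_const).div_const a
    exact (Real.smoothTransition.contDiff (n := 1)).comp h1
  set g : ℝ → ℝ := fun t => ψ t * (t ^ n)⁻¹ with hgdef
  have hgsmooth : ContDiff ℝ 1 g := by
    rw [contDiff_iff_contDiffAt]
    intro t
    rcases lt_or_ge t (a / 2) with h | h
    · have : g =ᶠ[nhds t] fun _ => 0 := by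
        filter_upwards [Iio_mem_nhds h] with s hs
        simp [hgdef, hψ0 s (le_of_lt hs)]
      exact (contDiffAt_const (c := (0:ℝ))).congr_of_eventuallyEq this
    · have ht : 0 < t := lt_of_lt_of_le (by linarith) h
      exact (hψc.contDiffAt).mul ((contDiffAt_id.pow n).inv (pow_ne_zero _ (ne_of_gt ht)))
  have hg_at : ∀ t, 3 * a / 4 < t → g =ᶠ[nhds t] fun s => (s ^ n)⁻¹ := by
    intro t ht
    filter_upwards [Ioi_mem_nhds ht] with s hs
    simp [hgdef, hψ1 s (le_of_lt hs)]
  -- the auxiliary function W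
  set W : (Fin n → ℝ) × ℝ → ℝ := fun p => g p.2 * ⟪u p, u p⟫ with hWdef
  have hWsmooth : ContDiff ℝ 1 W := (hgsmooth.comp contDiff_snd).mul (hu1.inner ℝ hu1)
  have hWsupp : Function.support W ⊆ tsupport u := by
    intro p hp
    by_contra hc'
    exact hp (by simp [hWdef, hu0 p hc'])
  have hWcs : HasCompactSupport W := hcs.mono' hWsupp
  set DW : (Fin n → ℝ) × ℝ → ℝ := fun p => fderiv ℝ W p (0, 1) with hDWdef
  -- DW is the line derivative
  have hline : ∀ (ξ : Fin n → ℝ) (t : ℝ),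
      HasDerivAt (fun s => W (ξ, s)) (DW (ξ, t)) t := by
    intro ξ t
    have hφ : HasDerivAt (fun s : ℝ => ((ξ, s) : (Fin n → ℝ) × ℝ)) (0, 1) t :=
      (hasDerivAt_const t ξ).prodMk (hasDerivAt_id t)
    exact ((hWsmooth.differentiable (by simp)) (ξ, t)).hasFDerivAt.comp_hasDerivAt t hφ
  have hDWcont : Continuous DW := by
    have h1 : Continuous (fderiv ℝ W) := hWsmooth.continuous_fderiv (by simp)
    exact (ContinuousLinearMap.apply ℝ ℝ ((0 : Fin n → ℝ), (1:ℝ))).continuous.comp h1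
  have hDWsupp : Function.support DW ⊆ tsupport W := by
    intro p hp
    by_contra hc'
    have : fderiv ℝ W p = 0 := by
      by_contra h
      exact hc' (support_fderiv_subset ℝ (Function.mem_support.mpr h))
    exact hp (by simp [hDWdef, this])
  have hDWcs : HasCompactSupport DW := hWcs.mono' hDWsupp
  have hDWint : Integrable DW := hDWcont.integrable_of_hasCompactSupport hDWcs
  -- the integral of DW over S vanishes
  have hS_prod : S = (univ : Set (Fin n → ℝ)) ×ˢ Ioi (0:ℝ) := by
    ext p; simp [hSdef, Set.mem_prod]
  have hzero : ∫ p in S, DW p = 0 := by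
    rw [hS_prod]
    rw [show (volume : Measure ((Fin n → ℝ) × ℝ)) = Measure.prod volume volume from rfl]
    rw [setIntegral_prod _ (hDWint.integrableOn), setIntegral_univ]
    have inner0 : ∀ ξ : Fin n → ℝ, (∫ t in Ioi (0:ℝ), DW (ξ, t)) = 0 := by
      intro ξ
      have hslice : ContDiff ℝ 1 (fun s => W (ξ, s)) :=
        hWsmooth.comp ((contDiff_const (c := ξ)).prodMk contDiff_id)
      have hslicecs : HasCompactSupport (fun s => W (ξ, s)) := by
        apply HasCompactSupport.intro (hWcs.image continuous_snd)
        intro s hs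
        by_contra hc'
        exact hs ⟨(ξ, s), subset_closure (Function.mem_support.mpr hc'), rfl⟩
      have hder : ∀ t ∈ Ioi (0:ℝ), DW (ξ, t) = deriv (fun s => W (ξ, s)) t := by
        intro t _
        exact ((hline ξ t).deriv).symm
      rw [setIntegral_congr_fun measurableSet_Ioi hder,
        hslicecs.integral_Ioi_deriv_eq hslice 0]
      have : W (ξ, 0) = 0 := by
        simp [hWdef, hgdef, hψ0 0 (by linarith)]
      simp [this]
    simp only [inner0, integral_zero]
  -- the three integrands
  set F0 : (Fin n → ℝ) × ℝ → ℝ := fun p => (p.2 ^ (n+1))⁻¹ * ‖u p‖ ^ 2 with hF0def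
  set F1 : (Fin n → ℝ) × ℝ → ℝ := fun p => (p.2 ^ (n-1))⁻¹ * ‖Du p‖ ^ 2 with hF1def
  set FS : (Fin n → ℝ) × ℝ → ℝ := fun p => (p.2 ^ (n-1))⁻¹ *
      (‖Du p‖ ^ 2 + ∑ i : Fin n, ‖fderiv ℝ u p (Pi.single i 1, 0)‖ ^ 2) with hFSdef
  set FC : (Fin n → ℝ) × ℝ → ℝ := fun p => (p.2 ^ n)⁻¹ * (2 * ⟪u p, Du p⟫) with hFCdef
  -- integrability of all of them
  have key_int : ∀ (m : ℕ) (v : (Fin n → ℝ) × ℝ → ℝ), Continuous v →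
      (∀ p, p ∉ tsupport u → v p = 0) →
      Integrable (fun p => (p.2 ^ m)⁻¹ * v p) := by
    intro m v hv hv0
    have hsupport : Function.support (fun p => (p.2 ^ m)⁻¹ * v p) ⊆ tsupport u := by
      intro p hp
      by_contra hc'
      exact hp (by simp [hv0 p hc'])
    have hcont : Continuous fun p : (Fin n → ℝ) × ℝ => (p.2 ^ m)⁻¹ * v p := by
      rw [continuous_iff_continuousAt]
      intro p
      by_cases hp : p ∈ tsupport u
      · have hpt : 0 < p.2 := hsupp hp
        have : ContinuousAt (fun p : (Fin n → ℝ) × ℝ => (p.2 ^ m)⁻¹) p :=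
          ((continuous_snd.pow m).continuousAt).inv₀ (pow_ne_zero _ (ne_of_gt hpt))
        exact this.mul hv.continuousAt
      · have hop : IsOpen (tsupport u)ᶜ := (isClosed_tsupport u).isOpen_compl
        have hev : (fun _ : (Fin n → ℝ) × ℝ => (0:ℝ)) =ᶠ[nhds p]
            fun q => (q.2 ^ m)⁻¹ * v q := by
          filter_upwards [hop.mem_nhds hp] with q hq
          simp [hv0 q hq]
        exact continuousAt_const.congr hev
    exact hcont.integrable_of_hasCompactSupport (hcs.mono' hsupport)
  have hv_u : ∀ p, p ∉ tsupport u → ‖u p‖ ^ 2 = 0 := fun p hp => by simp [hu0 p hp]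
  have hv_Du : ∀ p, p ∉ tsupport u → ‖Du p‖ ^ 2 = 0 := fun p hp => by simp [hDu0 p hp]
  have hF0int : Integrable F0 := key_int (n+1) _ ((hu.continuous.norm).pow 2) hv_u
  have hF1int : Integrable F1 := key_int (n-1) _ ((hDucont.norm).pow 2) hv_Du
  have hFSint : Integrable FS := by
    apply key_int (n-1) _ (((hDucont.norm).pow 2).add ?_)
    · intro p hp
      have h0 : fderiv ℝ u p = 0 := by
        by_contra h
        exact hp (support_fderiv_subset ℝ (Function.mem_support.mpr h))
      simp [hDu0 p hp, h0]
    · apply continuous_finset_sum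
      intro i _
      have h1 : Continuous (fderiv ℝ u) := hu.continuous_fderiv (by simp)
      exact (((ContinuousLinearMap.apply ℝ E ((Pi.single i 1 : Fin n → ℝ),
        (0:ℝ))).continuous.comp h1).norm).pow 2
  have hFCint : Integrable FC := by
    apply key_int n _ (continuous_const.mul ((hu.continuous.inner hDucont)))
    intro p hp
    simp [hu0 p hp]
  -- DW agrees with FC - n * F0 on S
  have hDW_eq : ∀ p ∈ S, DW p = FC p - n * F0 p := by
    rintro ⟨ξ, t⟩ hp
    have ht : (0:ℝ) < t := hp
    by_cases hmem : ((ξ, t) : (Fin n → ℝ) × ℝ) ∈ tsupport u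
    · -- here t ≥ a, so g = (·^n)⁻¹ near t
      have hta : a ≤ t := haT _ hmem
      have ht34 : 3 * a / 4 < t := by linarith
      have hgev : g =ᶠ[nhds t] fun s => (s ^ n)⁻¹ := hg_at t ht34
      have hu' : HasDerivAt (fun s => u (ξ, s)) (Du (ξ, t)) t := by
        have hφ : HasDerivAt (fun s : ℝ => ((ξ, s) : (Fin n → ℝ) × ℝ)) (0, 1) t :=
          (hasDerivAt_const t ξ).prodMk (hasDerivAt_id t)
        exact ((hu.differentiable (by simp)) (ξ, t)).hasFDerivAt.comp_hasDerivAt t hφ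
      have hinner : HasDerivAt (fun s => ⟪u (ξ, s), u (ξ, s)⟫)
          (⟪u (ξ, t), Du (ξ, t)⟫ + ⟪Du (ξ, t), u (ξ, t)⟫) t := hu'.inner ℝ hu'
      have hinv : HasDerivAt (fun s : ℝ => (s ^ n)⁻¹)
          (-(n * t ^ (n-1)) / (t ^ n) ^ 2) t :=
        (hasDerivAt_pow n t).inv (pow_ne_zero _ (ne_of_gt ht))
      have hprod : HasDerivAt (fun s => (s ^ n)⁻¹ * ⟪u (ξ, s), u (ξ, s)⟫)
          (-(n * t ^ (n-1)) / (t ^ n) ^ 2 * ⟪u (ξ, t), u (ξ, t)⟫ +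
            (t ^ n)⁻¹ * (⟪u (ξ, t), Du (ξ, t)⟫ + ⟪Du (ξ, t), u (ξ, t)⟫)) t :=
        hinv.mul hinner
    -- transfer to W along the eventual equality
      have hWev : (fun s => W (ξ, s)) =ᶠ[nhds t]
          (fun s => (s ^ n)⁻¹ * ⟪u (ξ, s), u (ξ, s)⟫) := by
        filter_upwards [hgev] with s hs
        simp [hWdef, hs]
      have hW' : HasDerivAt (fun s => W (ξ, s))
          (-(n * t ^ (n-1)) / (t ^ n) ^ 2 * ⟪u (ξ, t), u (ξ, t)⟫ +
            (t ^ n)⁻¹ * (⟪u (ξ, t), Du (ξ, t)⟫ + ⟪Du (ξ, t), u (ξ, t)⟫)) t :=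
        hprod.congr_of_eventuallyEq hWev
      have huniq := (hline ξ t).unique hW'
      rw [huniq]
      have hpow : t ^ (n+1) * t ^ (n-1) = (t ^ n) ^ 2 := by
        rw [← pow_add, ← pow_mul]
        congr 1
        omega
      have hcomm : ⟪Du (ξ, t), u (ξ, t)⟫ = ⟪u (ξ, t), Du (ξ, t)⟫ := real_inner_comm _ _
      have hns : ⟪u (ξ, t), u (ξ, t)⟫ = ‖u (ξ, t)‖ ^ 2 := real_inner_self_eq_norm_sq _
      have hfrac : -(↑n * t ^ (n-1)) / (t ^ n) ^ 2 = -(n : ℝ) * (t ^ (n+1))⁻¹ := by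
        rw [← hpow]
        field_simp
      rw [hcomm, hns, hfrac]
      simp only [hFCdef, hF0def]
      ring
    · -- off the support everything vanishes
      have hop : IsOpen (tsupport u)ᶜ := (isClosed_tsupport u).isOpen_compl
      have hWev : W =ᶠ[nhds (ξ, t)] fun _ => (0:ℝ) := by
        filter_upwards [hop.mem_nhds hmem] with q hq
        simp [hWdef, hu0 q hq]
      have hfW : fderiv ℝ W (ξ, t) = 0 := by
        rw [hWev.fderiv_eq]
        exact fderiv_const_apply 0
      have h1 : DW (ξ, t) = 0 := by simp [hDWdef, hfW]
      have h2 : u (ξ, t) = 0 := hu0 _ hmem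
      simp [h1, hFCdef, hF0def, h2]
  -- hence the integral identity
  have hiden : ∫ p in S, FC p = n * ∫ p in S, F0 p := by
    have h1 : ∫ p in S, DW p = ∫ p in S, (FC p - n * F0 p) :=
      setIntegral_congr_fun hSmeas hDW_eq
    rw [hzero] at h1
    have h2 : ∫ p in S, (FC p - n * F0 p)
        = (∫ p in S, FC p) - n * ∫ p in S, F0 p := by
      rw [integral_sub (hFCint.integrableOn) ((hF0int.integrableOn).const_mul _),
        integral_const_mul]
    rw [h2] at h1
    linarith
  -- pointwise AM-GM bound
  have hptwise : ∀ p ∈ S, FC p ≤ 2 / n * F1 p + n / 2 * F0 p := by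
    rintro ⟨ξ, t⟩ hp
    have ht : (0:ℝ) < t := hp
    simp only [hFCdef, hF1def, hF0def]
    apply amgm_aux (n : ℝ) ‖Du (ξ, t)‖ ‖u (ξ, t)‖ _ _ _ _ hn'
      (by positivity) (by positivity) (by positivity) ?_ ?_ (norm_nonneg _) (norm_nonneg _)
    · rw [← mul_inv, ← pow_add, inv_pow, ← pow_mul]
      congr 2
      omega
    · calc ⟪u (ξ, t), Du (ξ, t)⟫ ≤ ‖u (ξ, t)‖ * ‖Du (ξ, t)‖ := real_inner_le_norm _ _
        _ = ‖Du (ξ, t)‖ * ‖u (ξ, t)‖ := mul_comm _ _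
  have hFCle : ∫ p in S, FC p ≤ 2 / n * (∫ p in S, F1 p) + n / 2 * ∫ p in S, F0 p := by
    calc ∫ p in S, FC p ≤ ∫ p in S, (2 / n * F1 p + n / 2 * F0 p) :=
          setIntegral_mono_on (hFCint.integrableOn)
            (((hF1int.integrableOn).const_mul _).add ((hF0int.integrableOn).const_mul _))
            hSmeas hptwise
      _ = 2 / n * (∫ p in S, F1 p) + n / 2 * ∫ p in S, F0 p := by
          rw [integral_add ((hF1int.integrableOn).const_mul _)
            ((hF0int.integrableOn).const_mul _), integral_const_mul, integral_const_mul]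
  -- F1 ≤ FS pointwise
  have hF1le : ∫ p in S, F1 p ≤ ∫ p in S, FS p := by
    apply setIntegral_mono_on (hF1int.integrableOn) (hFSint.integrableOn) hSmeas
    rintro ⟨ξ, t⟩ hp
    have ht : (0:ℝ) < t := hp
    simp only [hF1def, hFSdef]
    have h1 : (0:ℝ) ≤ (t ^ (n-1))⁻¹ := by positivity
    have h2 : (0:ℝ) ≤ ∑ i : Fin n, ‖fderiv ℝ u (ξ, t) (Pi.single i 1, 0)‖ ^ 2 :=
      Finset.sum_nonneg fun i _ => by positivity
    nlinarith
  -- identify the integrals in the statement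
  have hG0 : ∫ p in S, p.2 ^ (-1 - (n:ℝ)) * ‖u p‖ ^ 2 = ∫ p in S, F0 p := by
    apply setIntegral_congr_fun hSmeas
    rintro ⟨ξ, t⟩ hp
    have ht : (0:ℝ) < t := hp
    have : t ^ (-1 - (n:ℝ)) = (t ^ (n+1))⁻¹ := by
      rw [show (-1 - (n:ℝ)) = -(((n+1 : ℕ) : ℝ)) by push_cast; ring,
        Real.rpow_neg ht.le, Real.rpow_natCast]
    simp only [hF0def, this]
  have hG1 : ∫ p in S, p.2 ^ (1 - (n:ℝ)) *
      (‖fderiv ℝ u p (0, 1)‖ ^ 2 + ∑ i : Fin n, ‖fderiv ℝ u p (Pi.single i 1, 0)‖ ^ 2)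
      = ∫ p in S, FS p := by
    apply setIntegral_congr_fun hSmeas
    rintro ⟨ξ, t⟩ hp
    have ht : (0:ℝ) < t := hp
    have : t ^ (1 - (n:ℝ)) = (t ^ (n-1))⁻¹ := by
      rw [show (1 - (n:ℝ)) = -(((n-1 : ℕ) : ℝ)) by
          rw [Nat.cast_sub hn]; push_cast; ring,
        Real.rpow_neg ht.le, Real.rpow_natCast]
    simp only [hFSdef, this, hDudef]
  -- conclude
  rw [ge_iff_le, hG0, hG1]
  have hA0 : 0 ≤ ∫ p in S, F0 p := by
    apply setIntegral_nonneg hSmeas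
    rintro ⟨ξ, t⟩ hp
    have ht : (0:ℝ) < t := hp
    simp only [hF0def]
    positivity
  set A := ∫ p in S, F0 p
  set B := ∫ p in S, FS p
  set B1 := ∫ p in S, F1 p
  have h1 : (n:ℝ) * A ≤ 2 / n * B1 + n / 2 * A := by rw [← hiden]; exact hFCle
  have h2 : (n:ℝ) / 2 * A ≤ 2 / n * B := by
    have : 2 / (n:ℝ) * B1 ≤ 2 / n * B := by
      apply mul_le_mul_of_nonneg_left hF1le (by positivity)
    linarith
  have h4 := mul_le_mul_of_nonneg_left h2 (le_of_lt hn')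
  have h5 : (n:ℝ) * (2 / n * B) = 2 * B := by field_simp
  nlinarith [h4, h5]
end

section
/- Let n ≥ 0, let V be a real inner product space of dimension n+1 with orthonormal basis e_0,…,e_n, let W be a real inner product space, and let F : V × V → W be a bilinear alternating map. Then the trace of the stress–energy tensor satisfies tr K_F = ((n−3)/2) · Q(F), where Q(F) = −(1/4) Σ_{i,j=0}^{n} ⟨F(e_i,e_j), F(e_i,e_j)⟩ and K_F(X,Y) = (1/2) Σ_{k=0}^{n} ⟨F(X,e_k), F(Y,e_k)⟩ + (1/2) Q(F) ⟨X,Y⟩. -/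
open scoped RealInnerProductSpace

/-- Pointwise trace identity for the Yang–Mills stress–energy tensor:
if `V` is an `(n+1)`-dimensional real inner product space with orthonormal basis `e`,
`W` a real inner product space, `F : V × V → W` bilinear and alternating,
`Q(F) = -(1/4) Σᵢⱼ ⟨F(eᵢ,eⱼ), F(eᵢ,eⱼ)⟩` and
`K_F(X,Y) = (1/2) Σₖ ⟨F(X,eₖ), F(Y,eₖ)⟩ + (1/2) Q(F) ⟨X,Y⟩`,
then `tr K_F = ((n-3)/2) Q(F)`. -/
theorem trace_stress_energy (n : ℕ) {V W : Type*}
    [NormedAddCommGroup V] [InnerProductSpace ℝ V]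
    [NormedAddCommGroup W] [InnerProductSpace ℝ W]
    (hdim : Module.finrank ℝ V = n + 1)
    (e : OrthonormalBasis (Fin (n + 1)) ℝ V)
    (F : V →ₗ[ℝ] V →ₗ[ℝ] W) (hF : ∀ v : V, F v v = 0)
    (Q : ℝ)
    (hQ : Q = -(1 / 4) * ∑ i : Fin (n + 1), ∑ j : Fin (n + 1),
      ⟪F (e i) (e j), F (e i) (e j)⟫)
    (K : V → V → ℝ)
    (hK : ∀ X Y : V, K X Y =
      (1 / 2) * ∑ k : Fin (n + 1), ⟪F X (e k), F Y (e k)⟫ + (1 / 2) * Q * ⟪X, Y⟫) :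
    ∑ i : Fin (n + 1), K (e i) (e i) = ((n : ℝ) - 3) / 2 * Q := by
  have hone : ∀ i : Fin (n+1), ⟪e i, e i⟫ = (1:ℝ) := fun i =>
    real_inner_self_eq_norm_sq (e i) ▸ by rw [e.orthonormal.1 i]; norm_num
  have hsum : ∑ i : Fin (n+1), ∑ j : Fin (n+1), ⟪F (e i) (e j), F (e i) (e j)⟫ = -4 * Q := by
    rw [hQ]; ring
  calc ∑ i : Fin (n + 1), K (e i) (e i)
      = ∑ i : Fin (n+1), ((1 / 2) * ∑ k : Fin (n + 1), ⟪F (e i) (e k), F (e i) (e k)⟫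
          + (1 / 2) * Q * ⟪e i, e i⟫) := by simp [hK]
    _ = (1/2) * (∑ i : Fin (n+1), ∑ k : Fin (n + 1), ⟪F (e i) (e k), F (e i) (e k)⟫)
          + (1/2) * Q * (n+1) := by
        rw [Finset.sum_add_distrib, ← Finset.mul_sum]
        simp [hone, Finset.sum_const]
        ring
    _ = ((n : ℝ) - 3) / 2 * Q := by rw [hsum]; ring
end

section
/- Let M be a type and L a group. Let G be the set of bijections Φ : M × L → M × L that are equivariant for the right L-action, i.e. Φ(m, l·l₀) = ( (Φ(m,l)).1 , (Φ(m,l)).2 · l₀ ) for all m ∈ M and l, l₀ ∈ L; then G is a subgroup of the permutation group of M × L, and G is isomorphic, as a group, to the semidirect product (M → L) ⋊_φ Perm(M), where M → L carries pointwise multiplication, Perm(M) is the group of bijections of M, and the action is φ(f)(σ) = σ ∘ f⁻¹. An explicit isomorphism sends the pair (σ, f) to the bijection (m, l) ↦ ( f(m), σ(f(m)) · l ). -/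
/-!
An automorphism `Φ` of the trivial bundle `M × L` commutes with right translations, so it is
determined by its values on the unit section: `Φ (m, l) = (f m, s m * l)` where
`(f m, s m) = Φ (m, 1)`. Bijectivity of `Φ` forces `f` to be a permutation of `M`, and setting
`σ = s ∘ f⁻¹` writes `Φ` as the image of `(σ, f)`. Composing two such maps multiplies the base
permutations and multiplies the gauge parts after twisting the second by `σ' ↦ σ' ∘ f⁻¹`, which
is the semidirect product law.
-/

open Equiv

section

variable {M L : Type*} [Group L]

def rightTranslation (l₀ : L) : Perm (M × L) :=
  prodCongr (Equiv.refl M) (Equiv.mulRight l₀)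

variable (M L) in
def bundleAut : Subgroup (Perm (M × L)) :=
  Subgroup.centralizer (Set.range rightTranslation)

theorem mem_bundleAut_iff {Φ : Perm (M × L)} :
    Φ ∈ bundleAut M L ↔
      ∀ (m : M) (l l₀ : L), Φ (m, l * l₀) = ((Φ (m, l)).1, (Φ (m, l)).2 * l₀) := by
  simp only [bundleAut, Subgroup.mem_centralizer_iff, Set.forall_mem_range, Equiv.ext_iff,
    Prod.forall, Perm.mul_apply, rightTranslation, prodCongr_apply, Prod.map, refl_apply,
    coe_mulRight]
  exact ⟨fun h m l l₀ => (h l₀ m l).symm, fun h l₀ m l => (h m l l₀).symm⟩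

theorem bundleAut_apply {Φ : Perm (M × L)} (hΦ : Φ ∈ bundleAut M L) (m : M) (l : L) :
    Φ (m, l) = ((Φ (m, 1)).1, (Φ (m, 1)).2 * l) := by
  simpa using mem_bundleAut_iff.mp hΦ m 1 l

def bundleAutOf (σ : M → L) (f : Perm M) : Perm (M × L) :=
  prodShear f fun m => Equiv.mulLeft (σ (f m))

@[simp]
theorem bundleAutOf_apply (σ : M → L) (f : Perm M) (m : M) (l : L) :
    bundleAutOf σ f (m, l) = (f m, σ (f m) * l) :=
  rfl

theorem bundleAutOf_mem (σ : M → L) (f : Perm M) : bundleAutOf σ f ∈ bundleAut M L :=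
  mem_bundleAut_iff.mpr fun m l l₀ => by simp [mul_assoc]

theorem bundleAutOf_one : bundleAutOf (1 : M → L) 1 = 1 := by
  ext ⟨m, l⟩ <;> simp

theorem bundleAutOf_mul (σ σ' : M → L) (f f' : Perm M) :
    bundleAutOf σ f * bundleAutOf σ' f' = bundleAutOf (σ * fun m => σ' (f⁻¹ m)) (f * f') := by
  ext ⟨m, l⟩ <;> simp [mul_assoc]

theorem eq_one_of_bundleAutOf_eq_one {σ : M → L} {f : Perm M} (h : bundleAutOf σ f = 1) :
    σ = 1 ∧ f = 1 := by
  have hpt (m : M) : (f m, σ (f m)) = (m, 1) := by simpa using congr($h (m, 1))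
  have hf : f = 1 := Equiv.ext fun m => (Prod.ext_iff.mp (hpt m)).1
  subst hf
  exact ⟨funext fun m => (Prod.ext_iff.mp (hpt m)).2, rfl⟩

theorem bijective_fst_apply_one {Φ : Perm (M × L)} (hΦ : Φ ∈ bundleAut M L) :
    Function.Bijective fun m => (Φ (m, 1)).1 := by
  refine ⟨fun m m' (hm : (Φ (m, 1)).1 = (Φ (m', 1)).1) => ?_, fun n => ?_⟩
  · have : Φ (m', (Φ (m', 1)).2⁻¹ * (Φ (m, 1)).2) = Φ (m, 1) := by
      rw [bundleAut_apply hΦ m', mul_inv_cancel_left, ← hm]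
    exact congrArg Prod.fst (Φ.injective this).symm
  · obtain ⟨p, hp⟩ := Φ.surjective (n, 1)
    refine ⟨p.1, ?_⟩
    simpa using congrArg Prod.fst ((bundleAut_apply hΦ p.1 p.2).symm.trans hp)

theorem exists_bundleAutOf_eq {Φ : Perm (M × L)} (hΦ : Φ ∈ bundleAut M L) :
    ∃ (σ : M → L) (f : Perm M), bundleAutOf σ f = Φ := by
  let f : Perm M := Equiv.ofBijective _ (bijective_fst_apply_one hΦ)
  refine ⟨fun n => (Φ (f.symm n, 1)).2, f, ?_⟩
  ext ⟨m, l⟩ <;> simp [f, bundleAut_apply hΦ m l]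

section SemidirectProduct

variable (φ : Perm M →* MulAut (M → L))
  (hφ : ∀ (f : Perm M) (σ : M → L) (m : M), φ f σ m = σ (f⁻¹ m))

def bundleAutHom : (M → L) ⋊[φ] Perm M →* Perm (M × L) where
  toFun x := bundleAutOf x.left x.right
  map_one' := bundleAutOf_one
  map_mul' x y := by
    simp only [SemidirectProduct.mul_left, SemidirectProduct.mul_right, bundleAutOf_mul]
    congr
    exact funext (hφ x.right y.left)

theorem bundleAutHom_injective : Function.Injective (bundleAutHom φ hφ) :=
  (injective_iff_map_eq_one _).mpr fun _ hx =>
    have h := eq_one_of_bundleAutOf_eq_one hx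
    SemidirectProduct.ext h.1 h.2

theorem range_bundleAutHom : (bundleAutHom φ hφ).range = bundleAut M L := by
  ext Φ
  constructor
  · rintro ⟨x, rfl⟩
    exact bundleAutOf_mem x.left x.right
  · intro hΦ
    obtain ⟨σ, f, rfl⟩ := exists_bundleAutOf_eq hΦ
    exact ⟨⟨σ, f⟩, rfl⟩

end SemidirectProduct

end

/-- The group of right-`L`-equivariant bijections of the trivial bundle `M × L` is a
subgroup `G` of `Perm (M × L)`, and `G` is isomorphic to the semidirect product
`(M → L) ⋊[φ] Perm M` (pointwise multiplication on `M → L`, action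
`φ(f)(σ) = σ ∘ f⁻¹`), an explicit isomorphism sending `(σ, f)` to
`(m, l) ↦ (f m, σ (f m) * l)`. -/
theorem gauge_group_semidirect (M L : Type*) [Group L]
    (φ : Equiv.Perm M →* MulAut (M → L))
    (hφ : ∀ (f : Equiv.Perm M) (σ : M → L) (m : M), φ f σ m = σ (f⁻¹ m)) :
    ∃ G : Subgroup (Equiv.Perm (M × L)),
      (∀ Φ : Equiv.Perm (M × L), Φ ∈ G ↔
        ∀ (m : M) (l l₀ : L), Φ (m, l * l₀) = ((Φ (m, l)).1, (Φ (m, l)).2 * l₀)) ∧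
      ∃ iso : ((M → L) ⋊[φ] Equiv.Perm M) ≃* G,
        ∀ (σ : M → L) (f : Equiv.Perm M) (m : M) (l : L),
          ((iso ⟨σ, f⟩ : G) : Equiv.Perm (M × L)) (m, l) = (f m, σ (f m) * l) :=
  ⟨bundleAut M L, fun _ => mem_bundleAut_iff,
    (MonoidHom.ofInjective (bundleAutHom_injective φ hφ)).trans
      (MulEquiv.subgroupCongr (range_bundleAutHom φ hφ)),
    fun _ _ _ _ => rfl⟩
end
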